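/- The linear form s : A → k defined on the basis {i, j, α, β, βα, γ, γ², δ, δ²} by s(βα) = 1, s(δ²) = 1 (equivalently s(αβ) = s(βα) = 1 noting αβ = δ²), and s = 0 on all other basis elements, is a symmetrising form on A: s(ab) = s(ba) for all a,b ∈ A, and the kernel of s contains no nonzero left ideal of A. -/

import Mathlib

/-! The 9-dimensional algebra `A` given by the quiver with vertices `i, j`, arrows
`α : i → j`, `β : j → i`, and loops `γ, δ` at `i`, with relations
`δ² = γ³ = αβ`, `δγ = γδ = 0`, `δα = γα = 0`, `βδ = βγ = 0`.
Paths compose left-to-right, so the product `x * y` means "first `x`, then `y`";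
in particular `α * β` is a loop at `i` and `β * α` is a loop at `j`.
We realise `A` as the quotient of the free algebra on the six generators
`e_i, e_j, α, β, γ, δ` by the path-algebra relations together with the quiver relations. -/

open FreeAlgebra

/-- The defining relations of the quiver algebra: generator `0` is the vertex idempotent
`e_i`, `1` is `e_j`, `2` is `α : i → j`, `3` is `β : j → i`, `4` is the loop `γ` at `i`,
and `5` is the loop `δ` at `i`. -/
inductive QuiverRel (k : Type*) [Field k] :
    FreeAlgebra k (Fin 6) → FreeAlgebra k (Fin 6) → Prop
  | idem_i : QuiverRel k (ι k 0 * ι k 0) (ι k 0)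
  | idem_j : QuiverRel k (ι k 1 * ι k 1) (ι k 1)
  | orth_ij : QuiverRel k (ι k 0 * ι k 1) 0
  | orth_ji : QuiverRel k (ι k 1 * ι k 0) 0
  | sum_idem : QuiverRel k (ι k 0 + ι k 1) 1
  | alpha_src : QuiverRel k (ι k 0 * ι k 2) (ι k 2)   -- α starts at i
  | alpha_tgt : QuiverRel k (ι k 2 * ι k 1) (ι k 2)   -- α ends at j
  | beta_src : QuiverRel k (ι k 1 * ι k 3) (ι k 3)    -- β starts at j
  | beta_tgt : QuiverRel k (ι k 3 * ι k 0) (ι k 3)    -- β ends at i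
  | gamma_src : QuiverRel k (ι k 0 * ι k 4) (ι k 4)
  | gamma_tgt : QuiverRel k (ι k 4 * ι k 0) (ι k 4)
  | delta_src : QuiverRel k (ι k 0 * ι k 5) (ι k 5)
  | delta_tgt : QuiverRel k (ι k 5 * ι k 0) (ι k 5)
  | delta_sq : QuiverRel k (ι k 5 * ι k 5) (ι k 2 * ι k 3)        -- δ² = αβ
  | gamma_cube : QuiverRel k (ι k 4 * (ι k 4 * ι k 4)) (ι k 2 * ι k 3)  -- γ³ = αβ
  | delta_gamma : QuiverRel k (ι k 5 * ι k 4) 0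
  | gamma_delta : QuiverRel k (ι k 4 * ι k 5) 0
  | delta_alpha : QuiverRel k (ι k 5 * ι k 2) 0
  | gamma_alpha : QuiverRel k (ι k 4 * ι k 2) 0
  | beta_delta : QuiverRel k (ι k 3 * ι k 5) 0
  | beta_gamma : QuiverRel k (ι k 3 * ι k 4) 0

variable (k : Type*) [Field k]

/-- The 9-dimensional quiver algebra `A`. -/
abbrev QuiverAlg := RingQuot (QuiverRel k)

/-- The vertex idempotent `i`. -/
noncomputable def qi : QuiverAlg k := RingQuot.mkAlgHom k (QuiverRel k) (ι k 0)
/-- The vertex idempotent `j`. -/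
noncomputable def qj : QuiverAlg k := RingQuot.mkAlgHom k (QuiverRel k) (ι k 1)
/-- The arrow `α : i → j`. -/
noncomputable def qα : QuiverAlg k := RingQuot.mkAlgHom k (QuiverRel k) (ι k 2)
/-- The arrow `β : j → i`. -/
noncomputable def qβ : QuiverAlg k := RingQuot.mkAlgHom k (QuiverRel k) (ι k 3)
/-- The loop `γ` at `i`. -/
noncomputable def qγ : QuiverAlg k := RingQuot.mkAlgHom k (QuiverRel k) (ι k 4)
/-- The loop `δ` at `i`. -/
noncomputable def qδ : QuiverAlg k := RingQuot.mkAlgHom k (QuiverRel k) (ι k 5)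

/-- The standard basis vector `{i, j, α, β, βα, γ, γ², δ, δ²}` of `A`. -/
noncomputable def qbasisVec : Fin 9 → QuiverAlg k :=
  ![qi k, qj k, qα k, qβ k, qβ k * qα k, qγ k, qγ k ^ 2, qδ k, qδ k ^ 2]

/-- The values defining the symmetrising form `s` on the standard basis:
`s(βα) = s(δ²) (= s(αβ)) = 1` and `s = 0` on the other basis elements. -/
def symValues (s : QuiverAlg k →ₗ[k] k) : Prop :=
  s (qi k) = 0 ∧ s (qj k) = 0 ∧ s (qα k) = 0 ∧ s (qβ k) = 0 ∧
  s (qβ k * qα k) = 1 ∧ s (qγ k) = 0 ∧ s (qγ k ^ 2) = 0 ∧ s (qδ k) = 0 ∧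
  s (qδ k ^ 2) = 1

/-! The nine paths `b = i, j, α, β, βα, γ, γ², δ, δ²` span `A`: their span contains `1 = i + j`
and is stable under left multiplication by the arrows. Left multiplication by an arrow sends each
of these paths to another one or to zero, which gives the left regular representation by
explicit `0/1` matrices, well defined because the relations hold for these matrices. Reading off
the coefficient of `δ²` in `x i` plus that of `βα` in `x j` from the matrix of `x` is a linear
form with the prescribed values, and the only one since the paths span. Symmetry and
non-degeneracy then reduce to finite tables of matrix products: `s (b_p b_q) = s (b_q b_p)`, and
each path `b_q` has a complementary path `d_q` with `s (d_q b_p) = δ_pq`, so the coordinates of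
`x` are the values `s (d_q x)`, which vanish when `x` lies in a left ideal inside the kernel
of `s`. -/

section SpanningFamily

variable {R A ι : Type*} [CommSemiring R] [Semiring A] [Algebra R A] {v : ι → A}

theorem LinearMap.apply_mul_comm_of_span_eq_top (hv : Submodule.span R (Set.range v) = ⊤)
    {s : A →ₗ[R] R} (h : ∀ p q, s (v p * v q) = s (v q * v p)) (a b : A) :
    s (a * b) = s (b * a) := by
  have hright (q : ι) : s ∘ₗ LinearMap.mulRight R (v q) = s ∘ₗ LinearMap.mulLeft R (v q) :=
    LinearMap.ext_on_range hv fun p => h p q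
  have hleft : s ∘ₗ LinearMap.mulLeft R a = s ∘ₗ LinearMap.mulRight R a :=
    LinearMap.ext_on_range hv fun q => LinearMap.congr_fun (hright q) a
  exact LinearMap.congr_fun hleft b

/-- The coefficient of `v q` in `x` is `s (d q * x)`. -/
theorem Ideal.eq_bot_of_forall_apply_eq_zero [Fintype ι] [DecidableEq ι]
    (hv : Submodule.span R (Set.range v) = ⊤) {s : A →ₗ[R] R} {d : ι → A}
    (hd : ∀ p q, s (d q * v p) = if p = q then 1 else 0) {I : Ideal A}
    (hI : ∀ x ∈ I, s x = 0) : I = ⊥ := by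
  refine (Submodule.eq_bot_iff I).2 fun x hx => ?_
  obtain ⟨c, rfl⟩ :=
    (Submodule.mem_span_range_iff_exists_fun R).1 (hv ▸ Submodule.mem_top (x := x))
  have hc (q : ι) : c q = 0 := by
    have := hI _ (I.mul_mem_left (d q) hx)
    simpa [Finset.mul_sum, hd] using this
  simp [hc]

end SpanningFamily

theorem mul_eq_zero_of_mul_absorb {M : Type*} [SemigroupWithZero M] {a b e f : M}
    (ha : a * e = a) (hb : f * b = b) (hef : e * f = 0) : a * b = 0 := by
  rw [← ha, ← hb, mul_assoc, ← mul_assoc e, hef, zero_mul, mul_zero]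

namespace QuiverAlg

section

variable {k}

theorem mk_ι_mul_mk_ι {a b : Fin 6} {y : FreeAlgebra k (Fin 6)}
    (h : QuiverRel k (ι k a * ι k b) y) :
    RingQuot.mkAlgHom k (QuiverRel k) (ι k a) * RingQuot.mkAlgHom k (QuiverRel k) (ι k b) =
      RingQuot.mkAlgHom k (QuiverRel k) y := by
  rw [← map_mul, RingQuot.mkAlgHom_rel k h]

@[simp] theorem qi_mul_qi : qi k * qi k = qi k := mk_ι_mul_mk_ι .idem_i
@[simp] theorem qj_mul_qj : qj k * qj k = qj k := mk_ι_mul_mk_ι .idem_j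
@[simp] theorem qi_mul_qj : qi k * qj k = 0 := (mk_ι_mul_mk_ι .orth_ij).trans (map_zero _)
@[simp] theorem qj_mul_qi : qj k * qi k = 0 := (mk_ι_mul_mk_ι .orth_ji).trans (map_zero _)
@[simp] theorem qi_mul_qα : qi k * qα k = qα k := mk_ι_mul_mk_ι .alpha_src
@[simp] theorem qα_mul_qj : qα k * qj k = qα k := mk_ι_mul_mk_ι .alpha_tgt
@[simp] theorem qj_mul_qβ : qj k * qβ k = qβ k := mk_ι_mul_mk_ι .beta_src
@[simp] theorem qβ_mul_qi : qβ k * qi k = qβ k := mk_ι_mul_mk_ι .beta_tgt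
@[simp] theorem qi_mul_qγ : qi k * qγ k = qγ k := mk_ι_mul_mk_ι .gamma_src
@[simp] theorem qγ_mul_qi : qγ k * qi k = qγ k := mk_ι_mul_mk_ι .gamma_tgt
@[simp] theorem qi_mul_qδ : qi k * qδ k = qδ k := mk_ι_mul_mk_ι .delta_src
@[simp] theorem qδ_mul_qi : qδ k * qi k = qδ k := mk_ι_mul_mk_ι .delta_tgt
@[simp] theorem qδ_mul_qγ : qδ k * qγ k = 0 := (mk_ι_mul_mk_ι .delta_gamma).trans (map_zero _)
@[simp] theorem qγ_mul_qδ : qγ k * qδ k = 0 := (mk_ι_mul_mk_ι .gamma_delta).trans (map_zero _)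
@[simp] theorem qδ_mul_qα : qδ k * qα k = 0 := (mk_ι_mul_mk_ι .delta_alpha).trans (map_zero _)
@[simp] theorem qγ_mul_qα : qγ k * qα k = 0 := (mk_ι_mul_mk_ι .gamma_alpha).trans (map_zero _)
@[simp] theorem qβ_mul_qδ : qβ k * qδ k = 0 := (mk_ι_mul_mk_ι .beta_delta).trans (map_zero _)
@[simp] theorem qβ_mul_qγ : qβ k * qγ k = 0 := (mk_ι_mul_mk_ι .beta_gamma).trans (map_zero _)

@[simp] theorem qα_mul_qβ : qα k * qβ k = qδ k * qδ k := by
  rw [qα, qβ, ← map_mul, ← RingQuot.mkAlgHom_rel k .delta_sq, map_mul]; rfl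

@[simp] theorem qγ_mul_qγ_mul_qγ : qγ k * qγ k * qγ k = qδ k * qδ k := by
  rw [qγ, ← map_mul, ← map_mul, mul_assoc, RingQuot.mkAlgHom_rel k .gamma_cube, map_mul]
  exact qα_mul_qβ

theorem qi_add_qj : qi k + qj k = 1 := by
  rw [qi, qj, ← map_add, RingQuot.mkAlgHom_rel k .sum_idem, map_one]

-- Arrows whose endpoints do not match compose to zero: insert the two vertex idempotents.
@[simp] theorem qi_mul_qβ : qi k * qβ k = 0 :=
  mul_eq_zero_of_mul_absorb qi_mul_qi qj_mul_qβ qi_mul_qj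
@[simp] theorem qj_mul_qα : qj k * qα k = 0 :=
  mul_eq_zero_of_mul_absorb qj_mul_qj qi_mul_qα qj_mul_qi
@[simp] theorem qj_mul_qγ : qj k * qγ k = 0 :=
  mul_eq_zero_of_mul_absorb qj_mul_qj qi_mul_qγ qj_mul_qi
@[simp] theorem qj_mul_qδ : qj k * qδ k = 0 :=
  mul_eq_zero_of_mul_absorb qj_mul_qj qi_mul_qδ qj_mul_qi
@[simp] theorem qα_mul_qi : qα k * qi k = 0 :=
  mul_eq_zero_of_mul_absorb qα_mul_qj qi_mul_qi qj_mul_qi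
@[simp] theorem qα_mul_qα : qα k * qα k = 0 :=
  mul_eq_zero_of_mul_absorb qα_mul_qj qi_mul_qα qj_mul_qi
@[simp] theorem qα_mul_qγ : qα k * qγ k = 0 :=
  mul_eq_zero_of_mul_absorb qα_mul_qj qi_mul_qγ qj_mul_qi
@[simp] theorem qα_mul_qδ : qα k * qδ k = 0 :=
  mul_eq_zero_of_mul_absorb qα_mul_qj qi_mul_qδ qj_mul_qi
@[simp] theorem qβ_mul_qj : qβ k * qj k = 0 :=
  mul_eq_zero_of_mul_absorb qβ_mul_qi qj_mul_qj qi_mul_qj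
@[simp] theorem qβ_mul_qβ : qβ k * qβ k = 0 :=
  mul_eq_zero_of_mul_absorb qβ_mul_qi qj_mul_qβ qi_mul_qj
@[simp] theorem qγ_mul_qj : qγ k * qj k = 0 :=
  mul_eq_zero_of_mul_absorb qγ_mul_qi qj_mul_qj qi_mul_qj
@[simp] theorem qγ_mul_qβ : qγ k * qβ k = 0 :=
  mul_eq_zero_of_mul_absorb qγ_mul_qi qj_mul_qβ qi_mul_qj
@[simp] theorem qδ_mul_qj : qδ k * qj k = 0 :=
  mul_eq_zero_of_mul_absorb qδ_mul_qi qj_mul_qj qi_mul_qj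
@[simp] theorem qδ_mul_qβ : qδ k * qβ k = 0 :=
  mul_eq_zero_of_mul_absorb qδ_mul_qi qj_mul_qβ qi_mul_qj

@[simp] theorem qδ_mul_qδ_mul_qα : qδ k * qδ k * qα k = 0 := by
  rw [mul_assoc, qδ_mul_qα, mul_zero]
@[simp] theorem qδ_mul_qδ_mul_qδ : qδ k * qδ k * qδ k = 0 := by
  rw [← qα_mul_qβ, mul_assoc, qβ_mul_qδ, mul_zero]

theorem generator_mul_qbasisVec_mem_span {a : QuiverAlg k}
    (ha : a ∈ ({qi k, qj k, qα k, qβ k, qγ k, qδ k} : Set (QuiverAlg k))) (p : Fin 9) :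
    a * qbasisVec k p ∈ Submodule.span k (Set.range (qbasisVec k)) := by
  suffices a * qbasisVec k p = 0 ∨ ∃ q, qbasisVec k q = a * qbasisVec k p by
    rcases this with h | ⟨q, h⟩
    · exact h ▸ zero_mem _
    · exact h ▸ Submodule.subset_span ⟨q, rfl⟩
  simp only [Fin.exists_fin_succ, Fin.exists_fin_zero]
  rcases ha with rfl | rfl | rfl | rfl | rfl | rfl <;> fin_cases p <;>
    simp [qbasisVec, pow_two, ← mul_assoc]

theorem generator_mul_mem_span {a : QuiverAlg k}
    (ha : a ∈ ({qi k, qj k, qα k, qβ k, qγ k, qδ k} : Set (QuiverAlg k))) {z : QuiverAlg k}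
    (hz : z ∈ Submodule.span k (Set.range (qbasisVec k))) :
    a * z ∈ Submodule.span k (Set.range (qbasisVec k)) := by
  refine (Submodule.span_le (p := (Submodule.span k _).comap (LinearMap.mulLeft k a))).2 ?_ hz
  rintro _ ⟨p, rfl⟩
  exact generator_mul_qbasisVec_mem_span ha p

end

theorem span_qbasisVec_eq_top : Submodule.span k (Set.range (qbasisVec k)) = ⊤ := by
  set S := Submodule.span k (Set.range (qbasisVec k))
  have hmul (y : FreeAlgebra k (Fin 6)) :
      ∀ z ∈ S, RingQuot.mkAlgHom k (QuiverRel k) y * z ∈ S := by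
    induction y using FreeAlgebra.induction with
    | grade0 r =>
      intro z hz
      rw [AlgHom.commutes, Algebra.algebraMap_eq_smul_one, smul_one_mul]
      exact S.smul_mem r hz
    | grade1 g =>
      have hg : RingQuot.mkAlgHom k (QuiverRel k) (ι k g) ∈
          ({qi k, qj k, qα k, qβ k, qγ k, qδ k} : Set (QuiverAlg k)) := by
        fin_cases g <;> simp [qi, qj, qα, qβ, qγ, qδ]
      exact fun _ hz => generator_mul_mem_span hg hz
    | mul a b ha hb => intro z hz; rw [map_mul, mul_assoc]; exact ha _ (hb z hz)
    | add a b ha hb => intro z hz; rw [map_add, add_mul]; exact S.add_mem (ha z hz) (hb z hz)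
  have hone : (1 : QuiverAlg k) ∈ S := by
    rw [← qi_add_qj]
    exact S.add_mem (Submodule.subset_span ⟨0, rfl⟩) (Submodule.subset_span ⟨1, rfl⟩)
  refine eq_top_iff.2 fun x _ => ?_
  obtain ⟨y, rfl⟩ := RingQuot.mkAlgHom_surjective k (QuiverRel k) x
  simpa using hmul y 1 hone

/-- `leftMulIdx g c = some r` when left multiplication by the `g`-th generator sends the `c`-th
vector of `qbasisVec` to the `r`-th one, and `none` when the product is zero. -/
def leftMulIdx : Fin 6 → Fin 9 → Option (Fin 9) :=
  ![![some 0, none, some 2, none, none, some 5, some 6, some 7, some 8],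
    ![none, some 1, none, some 3, some 4, none, none, none, none],
    ![none, some 2, none, some 8, none, none, none, none, none],
    ![some 3, none, some 4, none, none, none, none, none, none],
    ![some 5, none, none, none, none, some 6, some 8, none, none],
    ![some 7, none, none, none, none, none, none, some 8, none]]

def genMatNat (g : Fin 6) : Matrix (Fin 9) (Fin 9) ℕ :=
  Matrix.of fun r c => if leftMulIdx g c = some r then 1 else 0

def basisMatNat : Fin 9 → Matrix (Fin 9) (Fin 9) ℕ :=
  ![genMatNat 0, genMatNat 1, genMatNat 2, genMatNat 3, genMatNat 3 * genMatNat 2,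
    genMatNat 4, genMatNat 4 ^ 2, genMatNat 5, genMatNat 5 ^ 2]

/-- Column `c` of the matrix of `x` holds the coordinates of `x * qbasisVec c`, so this reads off
the coefficient of `δ²` in `x * i` plus that of `βα` in `x * j`. -/
def symFormNat (N : Matrix (Fin 9) (Fin 9) ℕ) : ℕ := N 8 0 + N 4 1

theorem symFormNat_basisMatNat :
    ∀ p, symFormNat (basisMatNat p) = ![0, 0, 0, 0, 1, 0, 0, 0, 1] p := by
  decide

theorem symFormNat_basisMatNat_mul_comm :
    ∀ p q, symFormNat (basisMatNat p * basisMatNat q) =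
      symFormNat (basisMatNat q * basisMatNat p) := by
  decide

/-- The basis vector paired with the `q`-th one: `i ↔ δ²`, `j ↔ βα`, `α ↔ β`, `γ ↔ γ²`, `δ ↔ δ`. -/
def dualIdx : Fin 9 → Fin 9 := ![8, 4, 3, 2, 1, 6, 5, 7, 0]

theorem symFormNat_basisMatNat_dualIdx_mul :
    ∀ p q, symFormNat (basisMatNat (dualIdx q) * basisMatNat p) = if p = q then 1 else 0 := by
  decide

noncomputable def genMat (g : Fin 6) : Matrix (Fin 9) (Fin 9) k :=
  (Nat.castRingHom k).mapMatrix (genMatNat g)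

theorem lift_genMat_eq_of_quiverRel ⦃x y : FreeAlgebra k (Fin 6)⦄ (h : QuiverRel k x y) :
    FreeAlgebra.lift k (genMat k) x = FreeAlgebra.lift k (genMat k) y := by
  cases h <;> simp only [map_mul, map_add, map_zero, map_one, FreeAlgebra.lift_ι_apply] <;>
    simp only [genMat, ← map_mul, ← map_add] <;>
    first
    | exact congrArg _ (by decide)
    | exact (congrArg _ (by decide)).trans (map_zero _)
    | exact (congrArg _ (by decide)).trans (map_one _)

noncomputable def regularRep : QuiverAlg k →ₐ[k] Matrix (Fin 9) (Fin 9) k :=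
  RingQuot.liftAlgHom k ⟨FreeAlgebra.lift k (genMat k), lift_genMat_eq_of_quiverRel k⟩

theorem regularRep_mk_ι (g : Fin 6) :
    regularRep k (RingQuot.mkAlgHom k (QuiverRel k) (ι k g)) = genMat k g := by
  rw [regularRep, RingQuot.liftAlgHom_mkAlgHom_apply, FreeAlgebra.lift_ι_apply]

theorem regularRep_qbasisVec (p : Fin 9) :
    regularRep k (qbasisVec k p) = (Nat.castRingHom k).mapMatrix (basisMatNat p) := by
  fin_cases p <;>
    simp [qbasisVec, basisMatNat, qi, qj, qα, qβ, qγ, qδ, regularRep_mk_ι, genMat,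
      -RingHom.mapMatrix_apply]

noncomputable def symForm : QuiverAlg k →ₗ[k] k :=
  (Matrix.entryLinearMap k k 8 0 + Matrix.entryLinearMap k k 4 1) ∘ₗ (regularRep k).toLinearMap

variable {k} in
theorem symForm_eq_symFormNat {x : QuiverAlg k} {N : Matrix (Fin 9) (Fin 9) ℕ}
    (h : regularRep k x = (Nat.castRingHom k).mapMatrix N) : symForm k x = symFormNat N := by
  simp [symForm, h, symFormNat]

theorem symForm_qbasisVec_mul (p q : Fin 9) :
    symForm k (qbasisVec k p * qbasisVec k q) = symFormNat (basisMatNat p * basisMatNat q) :=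
  symForm_eq_symFormNat (by rw [map_mul, regularRep_qbasisVec, regularRep_qbasisVec, map_mul])

theorem symValues_iff (s : QuiverAlg k →ₗ[k] k) :
    symValues k s ↔
      ∀ p, s (qbasisVec k p) = ((![0, 0, 0, 0, 1, 0, 0, 0, 1] : Fin 9 → ℕ) p : k) := by
  simp [symValues, Fin.forall_fin_succ, qbasisVec]

theorem symValues_symForm : symValues k (symForm k) :=
  (symValues_iff k _).2 fun p => by
    rw [symForm_eq_symFormNat (regularRep_qbasisVec k p), symFormNat_basisMatNat]

variable {k} in
theorem eq_symForm_of_symValues {s : QuiverAlg k →ₗ[k] k} (hs : symValues k s) : s = symForm k :=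
  LinearMap.ext_on_range (span_qbasisVec_eq_top k) fun p => by
    rw [(symValues_iff k s).1 hs p, (symValues_iff k _).1 (symValues_symForm k) p]

theorem symForm_mul_comm (a b : QuiverAlg k) : symForm k (a * b) = symForm k (b * a) :=
  LinearMap.apply_mul_comm_of_span_eq_top (span_qbasisVec_eq_top k) (fun p q => by
    rw [symForm_qbasisVec_mul, symForm_qbasisVec_mul, symFormNat_basisMatNat_mul_comm]) a b

theorem symForm_qbasisVec_dualIdx_mul (p q : Fin 9) :
    symForm k (qbasisVec k (dualIdx q) * qbasisVec k p) = if p = q then 1 else 0 := by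
  rw [symForm_qbasisVec_mul, symFormNat_basisMatNat_dualIdx_mul]
  split_ifs <;> simp

end QuiverAlg

/-- The linear form `s` on `A` defined on the basis `{i, j, α, β, βα, γ, γ², δ, δ²}` by
`s(βα) = s(δ²) = 1` and `s = 0` on all other basis elements exists, and any such form is
a symmetrising form: `s(ab) = s(ba)` for all `a, b`, and the kernel of `s` contains no
nonzero left ideal of `A`. -/
theorem stmt_8 :
    (∃ s : QuiverAlg k →ₗ[k] k, symValues k s) ∧
    ∀ s : QuiverAlg k →ₗ[k] k, symValues k s →
      (∀ a b : QuiverAlg k, s (a * b) = s (b * a)) ∧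
      (∀ I : Ideal (QuiverAlg k), (∀ x ∈ I, s x = 0) → I = ⊥) := by
  refine ⟨⟨QuiverAlg.symForm k, QuiverAlg.symValues_symForm k⟩, fun s hs => ?_⟩
  obtain rfl := QuiverAlg.eq_symForm_of_symValues hs
  exact ⟨QuiverAlg.symForm_mul_comm k, fun I hI =>
    Ideal.eq_bot_of_forall_apply_eq_zero (QuiverAlg.span_qbasisVec_eq_top k)
      (QuiverAlg.symForm_qbasisVec_dualIdx_mul k) hI⟩
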